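/- Let α ∈ [0, π/2) and let A, B be n×n complex matrices with W(A), W(B) ⊆ S_α, conformally partitioned into 2×2 blocks with square diagonal blocks. Then sec²(α) · Re((A+B)/(A_{11}+B_{11})) ≥ Re(A/A_{11}) + Re(B/B_{11}) in the Loewner order. -/

import Mathlib

/-!
For the Schur vector `u = (-X₁₁⁻¹ X₁₂ x, x)` one has `X u = (0, (X/X₁₁) x)`, so
`⟨u, X u⟩ = ⟨x, (X/X₁₁) x⟩`, and every `v` with second block `x` is `u + d` with `⟨d, X u⟩ = 0`.
Then `⟨u + t d, X (u + t d)⟩ = z + t b + |t|² c` lies in the closed sector for all `t ∈ ℂ`.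
Rotating by `sin α ± i cos α` turns each edge of the sector into a half-plane condition, and the
discriminants of the resulting real quadratics give `|b|² ≤ 4 sin² α Re z Re c`, hence
`Re ⟨v, X v⟩ ≥ cos² α Re ⟨x, (X/X₁₁) x⟩`. Applying this to `A` and `B` with `v` the Schur vector
of `A + B` gives the theorem.
-/

open Matrix ComplexOrder

/-- The numerical range (field of values) of a complex matrix. -/
def numericalRange {m : Type*} [Fintype m] (A : Matrix m m ℂ) : Set ℂ :=
  {z | ∃ x : m → ℂ, star x ⬝ᵥ x = 1 ∧ z = star x ⬝ᵥ A.mulVec x}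

/-- The sector `S_α` of half-angle `α` around the positive real axis. -/
def sector (α : ℝ) : Set ℂ :=
  {z | 0 < z.re ∧ |z.im| ≤ z.re * Real.tan α}

/-- The Schur complement `A/A₁₁ = A₂₂ - A₂₁ A₁₁⁻¹ A₁₂` of the (1,1) block. -/
noncomputable def schur {p q : ℕ} (A : Matrix (Fin p ⊕ Fin q) (Fin p ⊕ Fin q) ℂ) :
    Matrix (Fin q) (Fin q) ℂ :=
  A.toBlocks₂₂ - A.toBlocks₂₁ * (A.toBlocks₁₁)⁻¹ * A.toBlocks₁₂

/-- The Hermitian real part `(A + Aᴴ)/2` of a complex matrix. -/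
noncomputable def matRe {m : Type*} [Fintype m] (A : Matrix m m ℂ) : Matrix m m ℂ :=
  (1 / 2 : ℂ) • (A + Aᴴ)

-- the closure of `sector α` when `0 ≤ α < π / 2`
def closedSector (α : ℝ) : Set ℂ := insert 0 (sector α)

lemma sq_norm_le_four_mul_re_mul_re {z b c : ℂ}
    (h : ∀ t : ℂ, 0 ≤ (z + t * b + Complex.normSq t * c).re) :
    ‖b‖ ^ 2 ≤ 4 * c.re * z.re := by
  set e := Complex.exp (↑(-b.arg) * Complex.I)
  have he : e * b = ‖b‖ := by
    conv_lhs => rw [← Complex.norm_mul_exp_arg_mul_I b]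
    rw [mul_left_comm, ← Complex.exp_add, Complex.ofReal_neg, neg_mul, neg_add_cancel,
      Complex.exp_zero, mul_one]
  have hq : ∀ r : ℝ, 0 ≤ c.re * (r * r) + (-‖b‖) * r + z.re := by
    intro r
    have hr := h (-r * e)
    rw [mul_assoc, he, Complex.normSq_mul, Complex.normSq_neg, Complex.normSq_ofReal,
      ← Complex.sq_norm, Complex.norm_exp_ofReal_mul_I] at hr
    simp only [Complex.add_re, Complex.neg_re, Complex.mul_re,
      Complex.ofReal_re, Complex.ofReal_im] at hr
    linarith
  have := discrim_le_zero hq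
  rw [discrim] at this
  linarith

lemma le_four_mul_mul_of_le_four_mul_sub_mul_sub {x a p c q : ℝ}
    (hp₁ : 0 ≤ a - p) (hp₂ : 0 ≤ a + p) (hq₁ : 0 ≤ c - q) (hq₂ : 0 ≤ c + q)
    (h₁ : x ≤ 4 * (a - p) * (c - q)) (h₂ : x ≤ 4 * (a + p) * (c + q)) :
    x ≤ 4 * a * c := by
  rcases le_total 0 p with hp | hp <;> rcases le_total 0 q with hq | hq
  · nlinarith [mul_nonneg hp hq₁, mul_nonneg hq hp₁, mul_nonneg hp hq]
  · nlinarith [mul_nonneg hp (neg_nonneg.mpr hq)]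
  · nlinarith [mul_nonneg (neg_nonneg.mpr hp) hq]
  · nlinarith [mul_nonneg (neg_nonneg.mpr hp) hq₂, mul_nonneg (neg_nonneg.mpr hq) hp₂,
      mul_nonneg (neg_nonneg.mpr hp) (neg_nonneg.mpr hq)]

section Sector
variable {α : ℝ} {z w : ℂ}

lemma ofReal_mul_mem_sector {r : ℝ} (hr : 0 < r) (hz : z ∈ sector α) :
    (r : ℂ) * z ∈ sector α := by
  obtain ⟨hre, him⟩ := hz
  refine ⟨by simpa using mul_pos hr hre, ?_⟩
  simp only [Complex.re_ofReal_mul, Complex.im_ofReal_mul, abs_mul, abs_of_pos hr, mul_assoc]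
  exact mul_le_mul_of_nonneg_left him hr.le

lemma add_mem_sector (hz : z ∈ sector α) (hw : w ∈ sector α) : z + w ∈ sector α := by
  obtain ⟨hz₁, hz₂⟩ := hz
  obtain ⟨hw₁, hw₂⟩ := hw
  refine ⟨by simp only [Complex.add_re]; linarith, ?_⟩
  simp only [Complex.add_re, Complex.add_im, add_mul]
  exact (abs_add_le _ _).trans (add_le_add hz₂ hw₂)

lemma re_nonneg_of_mem_closedSector (hz : z ∈ closedSector α) : 0 ≤ z.re := by
  rcases hz with rfl | hz
  exacts [le_rfl, hz.1.le]

lemma abs_cos_mul_im_le_of_mem_closedSector (hα : 0 < Real.cos α) (hz : z ∈ closedSector α) :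
    |Real.cos α * z.im| ≤ Real.sin α * z.re := by
  rcases hz with rfl | ⟨-, him⟩
  · simp
  calc |Real.cos α * z.im| = Real.cos α * |z.im| := by rw [abs_mul, abs_of_pos hα]
    _ ≤ Real.cos α * (z.re * Real.tan α) := mul_le_mul_of_nonneg_left him hα.le
    _ = Real.sin α * z.re := by rw [Real.tan_eq_sin_div_cos]; field_simp

lemma sin_mul_re_sub_mul_cos_mul_im_nonneg (hα : 0 < Real.cos α) {σ : ℝ} (hσ : |σ| ≤ 1)
    (hz : z ∈ closedSector α) : 0 ≤ Real.sin α * z.re - σ * (Real.cos α * z.im) := by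
  have hσz : σ * (Real.cos α * z.im) ≤ |Real.cos α * z.im| :=
    calc σ * (Real.cos α * z.im) ≤ |σ| * |Real.cos α * z.im| := by
          rw [← abs_mul]; exact le_abs_self _
      _ ≤ |Real.cos α * z.im| := mul_le_of_le_one_left (abs_nonneg _) hσ
  linarith [abs_cos_mul_im_le_of_mem_closedSector hα hz]

lemma sq_norm_le_of_forall_mem_closedSector (hα : 0 < Real.cos α) {z b c : ℂ}
    (h : ∀ t : ℂ, z + t * b + Complex.normSq t * c ∈ closedSector α) {σ : ℝ} (hσ : |σ| = 1) :
    ‖b‖ ^ 2 ≤ 4 * (Real.sin α * c.re - σ * (Real.cos α * c.im)) *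
      (Real.sin α * z.re - σ * (Real.cos α * z.im)) := by
  -- a unit number rotating the closed sector into the right half-plane
  set ω : ℂ := Real.sin α + σ * Real.cos α * Complex.I
  have hωre : ∀ w : ℂ, (ω * w).re = Real.sin α * w.re - σ * (Real.cos α * w.im) := by
    intro w
    simp only [ω, Complex.mul_re, Complex.add_re, Complex.add_im, Complex.ofReal_re,
      Complex.ofReal_im, Complex.mul_im, Complex.I_re, Complex.I_im]
    ring
  have hω : ‖ω‖ = 1 := by
    have hσ2 : σ ^ 2 = 1 := by rw [← sq_abs, hσ, one_pow]
    have : Complex.normSq ω = 1 := by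
      simp only [ω, Complex.normSq_apply, Complex.add_re, Complex.add_im, Complex.ofReal_re,
        Complex.ofReal_im, Complex.mul_re, Complex.mul_im, Complex.I_re, Complex.I_im]
      linear_combination (Real.cos α) ^ 2 * hσ2 + Real.sin_sq_add_cos_sq α
    rw [Complex.norm_def, this, Real.sqrt_one]
  have := sq_norm_le_four_mul_re_mul_re (z := ω * z) (b := ω * b) (c := ω * c) fun t => by
    rw [show ω * z + t * (ω * b) + Complex.normSq t * (ω * c) =
      ω * (z + t * b + Complex.normSq t * c) by ring, hωre]
    exact sin_mul_re_sub_mul_cos_mul_im_nonneg hα hσ.le (h t)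
  rwa [norm_mul, hω, one_mul, hωre, hωre] at this

lemma cos_sq_mul_re_le_re_add_add (hα : 0 < Real.cos α) {z b c : ℂ} (hc : c ∈ closedSector α)
    (h : ∀ t : ℂ, z + t * b + Complex.normSq t * c ∈ closedSector α) :
    Real.cos α ^ 2 * z.re ≤ (z + b + c).re := by
  have hz : z ∈ closedSector α := by simpa using h 0
  have hb : ‖b‖ ^ 2 ≤ 4 * (Real.sin α * c.re) * (Real.sin α * z.re) := by
    have hupper {w : ℂ} (hw : w ∈ closedSector α) :=
      sin_mul_re_sub_mul_cos_mul_im_nonneg hα (σ := 1) (by simp) hw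
    have hlower {w : ℂ} (hw : w ∈ closedSector α) :=
      sin_mul_re_sub_mul_cos_mul_im_nonneg hα (σ := -1) (by simp) hw
    refine le_four_mul_mul_of_le_four_mul_sub_mul_sub (by simpa using hupper hc)
      (by simpa using hlower hc) (by simpa using hupper hz) (by simpa using hlower hz)
      (by simpa using sq_norm_le_of_forall_mem_closedSector hα h (σ := 1) (by simp))
      (by simpa using sq_norm_le_of_forall_mem_closedSector hα h (σ := -1) (by simp))
  have hzre := re_nonneg_of_mem_closedSector hz
  have hcre := re_nonneg_of_mem_closedSector hc
  have hnorm : ‖b‖ ≤ c.re + Real.sin α ^ 2 * z.re := by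
    refine (pow_le_pow_iff_left₀ (norm_nonneg b) (by positivity) two_ne_zero).mp ?_
    nlinarith [sq_nonneg (c.re - Real.sin α ^ 2 * z.re)]
  rw [Complex.add_re, Complex.add_re]
  nlinarith [neg_le_of_abs_le (Complex.abs_re_le_norm b), Real.sin_sq_add_cos_sq α]

end Sector

section NumericalRange

variable {m : Type*} [Fintype m] {α : ℝ} {X : Matrix m m ℂ}

lemma div_mem_numericalRange {y : m → ℂ} (hy : y ≠ 0) :
    (star y ⬝ᵥ X *ᵥ y) / (star y ⬝ᵥ y) ∈ numericalRange X := by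
  obtain ⟨hr, him⟩ := Complex.pos_iff.mp (dotProduct_star_self_pos_iff.mpr hy)
  set n := star y ⬝ᵥ y
  have hn : n = ((n.re : ℝ) : ℂ) := Complex.ext rfl (by simp [him])
  set c : ℂ := (((Real.sqrt n.re)⁻¹ : ℝ) : ℂ)
  have hc : star c * c = (n.re : ℂ)⁻¹ := by
    rw [Complex.star_def, Complex.conj_ofReal, ← Complex.ofReal_mul, ← sq,
      inv_pow, Real.sq_sqrt hr.le, Complex.ofReal_inv]
  refine ⟨c • y, ?_, ?_⟩
  · rw [star_smul, smul_dotProduct, dotProduct_smul, smul_smul, smul_eq_mul, hc, ← hn,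
      inv_mul_cancel₀ (by rw [hn]; exact_mod_cast hr.ne')]
  · rw [star_smul, smul_dotProduct, mulVec_smul, dotProduct_smul, smul_smul, smul_eq_mul, hc,
      ← hn, div_eq_inv_mul]

lemma quadForm_mem_sector (hX : numericalRange X ⊆ sector α) {y : m → ℂ} (hy : y ≠ 0) :
    star y ⬝ᵥ X *ᵥ y ∈ sector α := by
  obtain ⟨hr, him⟩ := Complex.pos_iff.mp (dotProduct_star_self_pos_iff.mpr hy)
  have hn : star y ⬝ᵥ y = (((star y ⬝ᵥ y).re : ℝ) : ℂ) := Complex.ext rfl (by simp [him])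
  have := ofReal_mul_mem_sector hr (hX (div_mem_numericalRange (X := X) hy))
  rwa [← hn, mul_div_cancel₀ _ (by rw [hn]; exact_mod_cast hr.ne')] at this

lemma quadForm_mem_closedSector (hX : numericalRange X ⊆ sector α) (y : m → ℂ) :
    star y ⬝ᵥ X *ᵥ y ∈ closedSector α := by
  by_cases hy : y = 0
  · simp [hy, closedSector]
  · exact Or.inr (quadForm_mem_sector hX hy)

lemma isUnit_det_of_numericalRange_subset_sector [DecidableEq m]
    (hX : numericalRange X ⊆ sector α) : IsUnit X.det := by
  refine isUnit_iff_ne_zero.mpr fun hdet => ?_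
  obtain ⟨v, hv, hXv⟩ := exists_mulVec_eq_zero_iff.mpr hdet
  simpa [hXv] using (quadForm_mem_sector hX hv).1

lemma numericalRange_add_subset_sector {A B : Matrix m m ℂ}
    (hA : numericalRange A ⊆ sector α) (hB : numericalRange B ⊆ sector α) :
    numericalRange (A + B) ⊆ sector α := by
  rintro _ ⟨x, hx, rfl⟩
  rw [add_mulVec, dotProduct_add]
  exact add_mem_sector (hA ⟨x, hx, rfl⟩) (hB ⟨x, hx, rfl⟩)

lemma numericalRange_toBlocks₁₁_subset {n : Type*} [Fintype n] (X : Matrix (m ⊕ n) (m ⊕ n) ℂ) :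
    numericalRange X.toBlocks₁₁ ⊆ numericalRange X := by
  rintro _ ⟨x, hx, rfl⟩
  refine ⟨Sum.elim x 0, by simpa [Function.star_sumElim, dotProduct_block] using hx, ?_⟩
  conv_rhs => rw [← fromBlocks_toBlocks X]
  simp [Function.star_sumElim, fromBlocks_mulVec, dotProduct_block]

lemma isUnit_det_toBlocks₁₁_of_numericalRange_subset_sector {n : Type*} [Fintype n]
    [DecidableEq m] {X : Matrix (m ⊕ n) (m ⊕ n) ℂ} (hX : numericalRange X ⊆ sector α) :
    IsUnit X.toBlocks₁₁.det :=
  isUnit_det_of_numericalRange_subset_sector ((numericalRange_toBlocks₁₁_subset X).trans hX)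

lemma quadForm_add_smul {u d : m → ℂ} (hdu : star d ⬝ᵥ X *ᵥ u = 0) (t : ℂ) :
    star (u + t • d) ⬝ᵥ X *ᵥ (u + t • d) =
      star u ⬝ᵥ X *ᵥ u + t * (star u ⬝ᵥ X *ᵥ d) + Complex.normSq t * (star d ⬝ᵥ X *ᵥ d) := by
  simp only [star_add, star_smul, mulVec_add, mulVec_smul, dotProduct_add, add_dotProduct,
    dotProduct_smul, smul_dotProduct, hdu, smul_eq_mul, Complex.normSq_eq_conj_mul_self]
  simp only [Complex.star_def, mul_zero, add_zero]
  ring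

lemma cos_sq_mul_re_quadForm_le (hα : 0 < Real.cos α) (hX : numericalRange X ⊆ sector α)
    {u d : m → ℂ} (hdu : star d ⬝ᵥ X *ᵥ u = 0) :
    Real.cos α ^ 2 * (star u ⬝ᵥ X *ᵥ u).re ≤ (star (u + d) ⬝ᵥ X *ᵥ (u + d)).re := by
  have := cos_sq_mul_re_le_re_add_add hα (quadForm_mem_closedSector hX d) fun t =>
    quadForm_add_smul hdu t ▸ quadForm_mem_closedSector hX (u + t • d)
  rwa [← one_smul ℂ d, quadForm_add_smul hdu, one_mul, Complex.normSq_one, Complex.ofReal_one,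
    one_mul]

end NumericalRange

section Schur
variable {p q : ℕ} {α : ℝ} {X : Matrix (Fin p ⊕ Fin q) (Fin p ⊕ Fin q) ℂ}

noncomputable def schurVec (X : Matrix (Fin p ⊕ Fin q) (Fin p ⊕ Fin q) ℂ) (x : Fin q → ℂ) :
    Fin p ⊕ Fin q → ℂ :=
  Sum.elim (-(X.toBlocks₁₁⁻¹ * X.toBlocks₁₂) *ᵥ x) x

lemma mulVec_schurVec (h : IsUnit X.toBlocks₁₁.det) (x : Fin q → ℂ) :
    X *ᵥ schurVec X x = Sum.elim (0 : Fin p → ℂ) (schur X *ᵥ x) := by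
  conv_lhs => enter [1]; rw [← fromBlocks_toBlocks X]
  rw [schurVec, fromBlocks_mulVec, Sum.elim_comp_inl, Sum.elim_comp_inr, schur, sub_mulVec,
    neg_mulVec, mulVec_neg, mulVec_neg, mulVec_mulVec, mulVec_mulVec, ← Matrix.mul_assoc,
    mul_nonsing_inv _ h, Matrix.one_mul, Matrix.mul_assoc]
  congr 1 <;> abel

lemma dotProduct_mulVec_schurVec (h : IsUnit X.toBlocks₁₁.det) (x : Fin q → ℂ)
    (d : Fin p ⊕ Fin q → ℂ) :
    star d ⬝ᵥ X *ᵥ schurVec X x = star (d ∘ Sum.inr) ⬝ᵥ schur X *ᵥ x := by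
  rw [mulVec_schurVec h, dotProduct_block, Sum.elim_comp_inl, Sum.elim_comp_inr,
    dotProduct_zero, zero_add]
  rfl

lemma cos_sq_mul_re_schur_le (hα : 0 < Real.cos α) (hX : numericalRange X ⊆ sector α)
    (x : Fin q → ℂ) {v : Fin p ⊕ Fin q → ℂ} (hv : v ∘ Sum.inr = x) :
    Real.cos α ^ 2 * (star x ⬝ᵥ schur X *ᵥ x).re ≤ (star v ⬝ᵥ X *ᵥ v).re := by
  have h := isUnit_det_toBlocks₁₁_of_numericalRange_subset_sector hX
  have hdu : star (v - schurVec X x) ⬝ᵥ X *ᵥ schurVec X x = 0 := by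
    have hd : (v - schurVec X x) ∘ Sum.inr = 0 := by
      ext j
      simp [schurVec, ← congrFun hv j]
    rw [dotProduct_mulVec_schurVec h, hd, star_zero, zero_dotProduct]
  have := cos_sq_mul_re_quadForm_le hα hX hdu
  rwa [dotProduct_mulVec_schurVec h, add_sub_cancel] at this

end Schur

section MatRe
variable {m : Type*} [Fintype m]

lemma dotProduct_matRe_mulVec (Y : Matrix m m ℂ) (x : m → ℂ) :
    star x ⬝ᵥ matRe Y *ᵥ x = ((star x ⬝ᵥ Y *ᵥ x).re : ℂ) := by
  have hconj : star x ⬝ᵥ Yᴴ *ᵥ x = star (star x ⬝ᵥ Y *ᵥ x) := by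
    rw [star_dotProduct, star_mulVec, conjTranspose_conjTranspose, dotProduct_mulVec]
  rw [matRe, smul_mulVec, dotProduct_smul, add_mulVec, dotProduct_add, hconj, Complex.star_def,
    Complex.add_conj, smul_eq_mul]
  push_cast
  ring

lemma isHermitian_matRe (Y : Matrix m m ℂ) : (matRe Y).IsHermitian := by
  rw [IsHermitian, matRe, conjTranspose_smul, conjTranspose_add, conjTranspose_conjTranspose,
    add_comm]
  norm_num

lemma posSemidef_matRe {Y : Matrix m m ℂ} (h : ∀ x, 0 ≤ (star x ⬝ᵥ Y *ᵥ x).re) :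
    (matRe Y).PosSemidef :=
  .of_dotProduct_mulVec_nonneg (isHermitian_matRe Y) fun x => by
    rw [dotProduct_matRe_mulVec]
    exact_mod_cast h x

lemma ofReal_smul_matRe_sub_matRe_add_matRe (c : ℝ) (Y Z W : Matrix m m ℂ) :
    (c : ℂ) • matRe Y - (matRe Z + matRe W) = matRe ((c : ℂ) • Y - (Z + W)) := by
  simp only [matRe, conjTranspose_sub, conjTranspose_add, conjTranspose_smul, Complex.star_def,
    Complex.conj_ofReal]
  module

end MatRe

theorem sec_sq_re_schur_add {p q : ℕ} (α : ℝ) (hα : α ∈ Set.Ico 0 (Real.pi / 2))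
    (A B : Matrix (Fin p ⊕ Fin q) (Fin p ⊕ Fin q) ℂ)
    (hA : numericalRange A ⊆ sector α) (hB : numericalRange B ⊆ sector α) :
    (((((Real.cos α)⁻¹ ^ 2 : ℝ) : ℂ) • matRe (schur (A + B))) -
      (matRe (schur A) + matRe (schur B))).PosSemidef := by
  have hcos : 0 < Real.cos α :=
    Real.cos_pos_of_mem_Ioo ⟨by linarith [Real.pi_pos, hα.1], hα.2⟩
  rw [ofReal_smul_matRe_sub_matRe_add_matRe]
  refine posSemidef_matRe fun x => ?_
  have h := isUnit_det_toBlocks₁₁_of_numericalRange_subset_sector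
    (numericalRange_add_subset_sector hA hB)
  set u := schurVec (A + B) x
  have hu : star u ⬝ᵥ (A + B) *ᵥ u = star x ⬝ᵥ schur (A + B) *ᵥ x :=
    dotProduct_mulVec_schurVec h x u
  have hA' := cos_sq_mul_re_schur_le hcos hA x (v := u) rfl
  have hB' := cos_sq_mul_re_schur_le hcos hB x (v := u) rfl
  rw [add_mulVec, dotProduct_add] at hu
  simp only [sub_mulVec, add_mulVec, smul_mulVec, dotProduct_sub, dotProduct_add,
    dotProduct_smul, smul_eq_mul, Complex.sub_re, Complex.add_re, Complex.re_ofReal_mul, ← hu]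
  rw [sub_nonneg, inv_pow, ← div_eq_inv_mul, le_div_iff₀ (by positivity)]
  linarith
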